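/- arXiv:1811.02482 — 7 statements merged into one kernel-verified Lean document; each statement's English description precedes it below -/
import Mathlib

section
/- Let I ⊆ ℝ^d, let V be a finite set of points with V ⊆ I, and suppose I = ⋃_{k ∈ K} S_k, where each S_k is the convex hull of an affinely independent family of points v₀ᵏ, …, v_dᵏ all belonging to V. Let f : ℝ^d → ℝ, and suppose σ ≥ 0 is such that for every k, the linear interpolant f_lᵏ of f on S_k satisfies |f(s) − f_lᵏ(s)| ≤ σ for all s ∈ S_k. If f_u and f_b are affine maps with f_u(v) ≥ f(v) ≥ f_b(v) for all v ∈ V, then f_b(x) − σ ≤ f(x) ≤ f_u(x) + σ for all x ∈ I. -/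
/-- The paper's Lemma 2: let `I ⊆ ℝ^d` be covered by simplicial mesh elements `S k`
whose vertices `v k 0, …, v k d` are grid points in the finite set `V ⊆ I`. If on each
`S k` the linear interpolant `fl k` of `f` (the affine map agreeing with `f` at the
vertices of `S k`) has error at most `σ`, and the affine maps `fu, fb` satisfy
`fu(v) ≥ f(v) ≥ fb(v)` at every grid point `v ∈ V`, then
`fb − σ ≤ f ≤ fu + σ` on all of `I`. -/
theorem mesh_based_bracketing
    (d : ℕ) (I : Set (EuclideanSpace ℝ (Fin d)))
    (V : Finset (EuclideanSpace ℝ (Fin d)))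
    (hVI : (V : Set (EuclideanSpace ℝ (Fin d))) ⊆ I)
    (K : Type*) (S : K → Set (EuclideanSpace ℝ (Fin d)))
    (v : K → Fin (d + 1) → EuclideanSpace ℝ (Fin d))
    (hvind : ∀ k, AffineIndependent ℝ (v k))
    (hvV : ∀ k i, v k i ∈ V)
    (hS : ∀ k, S k = convexHull ℝ (Set.range (v k)))
    (hI : I = ⋃ k, S k)
    (f : EuclideanSpace ℝ (Fin d) → ℝ)
    (σ : ℝ) (hσ : 0 ≤ σ)
    (fl : K → EuclideanSpace ℝ (Fin d) →ᵃ[ℝ] ℝ)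
    (hfl : ∀ k i, fl k (v k i) = f (v k i))
    (herr : ∀ k, ∀ s ∈ S k, |f s - fl k s| ≤ σ)
    (fu fb : EuclideanSpace ℝ (Fin d) →ᵃ[ℝ] ℝ)
    (hfu : ∀ x ∈ V, fu x ≥ f x)
    (hfb : ∀ x ∈ V, fb x ≤ f x) :
    ∀ x ∈ I, fb x - σ ≤ f x ∧ f x ≤ fu x + σ := by
  intro x hx
  rw [hI] at hx
  obtain ⟨k, hk⟩ := Set.mem_iUnion.mp hx
  have hxS := hk
  rw [hS k] at hk
  -- fl k x ≤ fu x on the hull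
  have hup : fl k x ≤ fu x := by
    have hconv : Convex ℝ {y : EuclideanSpace ℝ (Fin d) | fl k y ≤ fu y} := by
      have : {y : EuclideanSpace ℝ (Fin d) | fl k y ≤ fu y}
          = (fl k - fu) ⁻¹' Set.Iic 0 := by
        ext y; simp [sub_nonpos]
      rw [this]
      exact (convex_Iic (0 : ℝ)).affine_preimage (fl k - fu)
    have hsub : Set.range (v k) ⊆ {y | fl k y ≤ fu y} := by
      rintro _ ⟨i, rfl⟩
      simp only [Set.mem_setOf_eq, hfl k i]
      exact hfu _ (hvV k i)
    exact convexHull_min hsub hconv hk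
  have hlo : fb x ≤ fl k x := by
    have hconv : Convex ℝ {y : EuclideanSpace ℝ (Fin d) | fb y ≤ fl k y} := by
      have : {y : EuclideanSpace ℝ (Fin d) | fb y ≤ fl k y}
          = (fb - fl k) ⁻¹' Set.Iic 0 := by
        ext y; simp [sub_nonpos]
      rw [this]
      exact (convex_Iic (0 : ℝ)).affine_preimage (fb - fl k)
    have hsub : Set.range (v k) ⊆ {y | fb y ≤ fl k y} := by
      rintro _ ⟨i, rfl⟩
      simp only [Set.mem_setOf_eq, hfl k i]
      exact hfb _ (hvV k i)
    exact convexHull_min hsub hconv hk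
  have herr' := abs_le.mp (herr k x hxS)
  constructor <;> linarith [herr'.1, herr'.2]
end

section
/- Let a, b ∈ ℝ^d with aⱼ ≤ bⱼ for all j, and let I = {x ∈ ℝ^d : aⱼ ≤ xⱼ ≤ bⱼ for all j} be the corresponding hyperrectangle with corner set C = {x ∈ ℝ^d : for each j, xⱼ = aⱼ or xⱼ = bⱼ}. Let V be a finite set of points with C ⊆ V ⊆ I, suppose I = ⋃_{k ∈ K} S_k where each S_k is the convex hull of an affinely independent family of points of V, let f : ℝ^d → ℝ, and suppose σ ≥ 0 is such that for every k the linear interpolant f_lᵏ of f on S_k satisfies |f(s) − f_lᵏ(s)| ≤ σ on S_k. Suppose the affine maps f_u, f_b and the real number θ satisfy the linear-program constraints: f_u(v) ≥ f(v) and f_b(v) ≤ f(v) for all v ∈ V, and f_u(c) − f_b(c) ≤ θ for all c ∈ C. Then the affine maps f̄ := f_u + σ and f̲ := f_b − σ satisfy f̲(x) ≤ f(x) ≤ f̄(x) and f̄(x) − f̲(x) ≤ θ + 2σ for all x ∈ I. -/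
/-!
Every point of the box is a convex combination of its corners, and every point of a mesh
simplex is a convex combination of its vertices, which lie in `V`. Inequalities between affine
maps pass to convex hulls, so `fu - fb ≤ θ` holds on the whole box and `fb ≤ fl k ≤ fu` on the
simplex `S k`; the interpolation error `σ` then bridges `fl k` and `f`.
-/

open Set

theorem EuclideanSpace.mem_convexHull_corners {ι : Type*} [Finite ι] {a b : ι → ℝ}
    {x : EuclideanSpace ℝ ι} (hx : ∀ j, a j ≤ x j ∧ x j ≤ b j) :
    x ∈ convexHull ℝ {y : EuclideanSpace ℝ ι | ∀ j, y j = a j ∨ y j = b j} := by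
  let toLp := (WithLp.linearEquiv 2 ℝ (ι → ℝ)).symm.toLinearMap
  have hcorners : toLp '' univ.pi (fun j ↦ {a j, b j}) ⊆
      {y : EuclideanSpace ℝ ι | ∀ j, y j = a j ∨ y j = b j} := by
    rintro _ ⟨z, hz, rfl⟩ j
    simpa [toLp] using hz j (mem_univ j)
  refine convexHull_mono hcorners ?_
  rw [← LinearMap.image_convexHull]
  refine ⟨WithLp.ofLp x, mem_convexHull_pi fun j _ ↦ ?_, rfl⟩
  rw [convexHull_pair, segment_eq_uIcc]
  exact Icc_subset_uIcc (hx j)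

namespace AffineMap

variable {E : Type*} [AddCommGroup E] [Module ℝ E] {s : Set E} {x : E}

theorem le_of_mem_convexHull {φ : E →ᵃ[ℝ] ℝ} {c : ℝ} (hs : ∀ y ∈ s, φ y ≤ c)
    (hx : x ∈ convexHull ℝ s) : φ x ≤ c :=
  convexHull_min hs ((convex_Iic c).affine_preimage φ) hx

theorem le_of_le_on_convexHull {φ ψ : E →ᵃ[ℝ] ℝ} (hs : ∀ y ∈ s, φ y ≤ ψ y)
    (hx : x ∈ convexHull ℝ s) : φ x ≤ ψ x :=
  sub_nonpos.1 <| le_of_mem_convexHull (φ := φ - ψ) (fun y hy ↦ sub_nonpos.2 (hs y hy)) hx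

end AffineMap

theorem lp_feasible_point_gives_abstraction_general
    (d : ℕ) (a b : Fin d → ℝ)
    (I C : Set (EuclideanSpace ℝ (Fin d)))
    (hI : I = {x : EuclideanSpace ℝ (Fin d) | ∀ j, a j ≤ x j ∧ x j ≤ b j})
    (hC : C = {x : EuclideanSpace ℝ (Fin d) | ∀ j, x j = a j ∨ x j = b j})
    (V : Finset (EuclideanSpace ℝ (Fin d)))
    (K : Type*) (S : K → Set (EuclideanSpace ℝ (Fin d)))
    (v : K → Fin (d + 1) → EuclideanSpace ℝ (Fin d))
    (hvV : ∀ k i, v k i ∈ V)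
    (hS : ∀ k, S k = convexHull ℝ (Set.range (v k)))
    (hIu : I = ⋃ k, S k)
    (f : EuclideanSpace ℝ (Fin d) → ℝ)
    (σ : ℝ)
    (fl : K → EuclideanSpace ℝ (Fin d) →ᵃ[ℝ] ℝ)
    (hfl : ∀ k i, fl k (v k i) = f (v k i))
    (herr : ∀ k, ∀ s ∈ S k, |f s - fl k s| ≤ σ)
    (fu fb : EuclideanSpace ℝ (Fin d) →ᵃ[ℝ] ℝ) (θ : ℝ)
    (hfu : ∀ x ∈ V, fu x ≥ f x)
    (hfb : ∀ x ∈ V, fb x ≤ f x)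
    (hθ : ∀ c ∈ C, fu c - fb c ≤ θ) :
    ∀ x ∈ I, (fb x - σ ≤ f x ∧ f x ≤ fu x + σ) ∧
      (fu x + σ) - (fb x - σ) ≤ θ + 2 * σ := by
  intro x hx
  have hgap : fu x - fb x ≤ θ := by
    subst hI hC
    exact AffineMap.le_of_mem_convexHull (φ := fu - fb) hθ
      (EuclideanSpace.mem_convexHull_corners hx)
  obtain ⟨k, hxk⟩ := mem_iUnion.1 (hIu ▸ hx)
  have hx_hull : x ∈ convexHull ℝ (range (v k)) := hS k ▸ hxk
  have hfl_fu : fl k x ≤ fu x := by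
    refine AffineMap.le_of_le_on_convexHull ?_ hx_hull
    rintro _ ⟨i, rfl⟩
    exact (hfl k i).trans_le (hfu _ (hvV k i))
  have hfb_fl : fb x ≤ fl k x := by
    refine AffineMap.le_of_le_on_convexHull ?_ hx_hull
    rintro _ ⟨i, rfl⟩
    exact (hfb _ (hvV k i)).trans (hfl k i).ge
  obtain ⟨herr_lower, herr_upper⟩ := abs_le.1 (herr k x hxk)
  exact ⟨⟨by linarith, by linarith⟩, by linarith⟩

/-- Correctness content of the paper's Theorem 1 (scalar component): on a hyperrectangle
`I = [a, b]` triangulated by simplices with vertices among the grid points `V` (which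
include all corners `C` of `I`), any feasible point `(fu, fb, θ)` of the LP — i.e.
`fu(v) ≥ f(v)`, `fb(v) ≤ f(v)` for all grid points `v ∈ V` and `fu(c) − fb(c) ≤ θ` at
all corners `c ∈ C` — yields affine maps `f̄ = fu + σ` and `f̲ = fb − σ` bracketing `f`
on `I` with gap at most `θ + 2σ`, where `σ` bounds the interpolation error on each
mesh element. -/
theorem lp_feasible_point_gives_abstraction
    (d : ℕ) (a b : Fin d → ℝ) (hab : ∀ j, a j ≤ b j)
    (I C : Set (EuclideanSpace ℝ (Fin d)))
    (hI : I = {x : EuclideanSpace ℝ (Fin d) | ∀ j, a j ≤ x j ∧ x j ≤ b j})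
    (hC : C = {x : EuclideanSpace ℝ (Fin d) | ∀ j, x j = a j ∨ x j = b j})
    (V : Finset (EuclideanSpace ℝ (Fin d)))
    (hCV : C ⊆ (V : Set (EuclideanSpace ℝ (Fin d))))
    (hVI : (V : Set (EuclideanSpace ℝ (Fin d))) ⊆ I)
    (K : Type*) (S : K → Set (EuclideanSpace ℝ (Fin d)))
    (v : K → Fin (d + 1) → EuclideanSpace ℝ (Fin d))
    (hvind : ∀ k, AffineIndependent ℝ (v k))
    (hvV : ∀ k i, v k i ∈ V)
    (hS : ∀ k, S k = convexHull ℝ (Set.range (v k)))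
    (hIu : I = ⋃ k, S k)
    (f : EuclideanSpace ℝ (Fin d) → ℝ)
    (σ : ℝ) (hσ : 0 ≤ σ)
    (fl : K → EuclideanSpace ℝ (Fin d) →ᵃ[ℝ] ℝ)
    (hfl : ∀ k i, fl k (v k i) = f (v k i))
    (herr : ∀ k, ∀ s ∈ S k, |f s - fl k s| ≤ σ)
    (fu fb : EuclideanSpace ℝ (Fin d) →ᵃ[ℝ] ℝ) (θ : ℝ)
    (hfu : ∀ x ∈ V, fu x ≥ f x)
    (hfb : ∀ x ∈ V, fb x ≤ f x)
    (hθ : ∀ c ∈ C, fu c - fb c ≤ θ) :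
    ∀ x ∈ I, (fb x - σ ≤ f x ∧ f x ≤ fu x + σ) ∧
      (fu x + σ) - (fb x - σ) ≤ θ + 2 * σ :=
  lp_feasible_point_gives_abstraction_general d a b I C hI hC V K S v hvV hS hIu f σ fl hfl herr fu
    fb θ hfu hfb hθ
end

section
/- Let v₀, …, v_d be affinely independent points of ℝ^d with convex hull S, let f : ℝ^d → ℝ, and let f_l be the linear interpolant of f on S. Suppose f is Lipschitz with constant λ ≥ 0 on S, and suppose S is contained in a closed ball of radius ρ (centered at some point c ∈ ℝ^d). Then |f(s) − f_l(s)| ≤ 2λρ for all s ∈ S. -/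
/-- Case (i) of the paper's Proposition 1: if `f` is Lipschitz with constant `L` on the
simplex `S = conv{v₀, …, v_d}` and `S` is contained in a closed ball of radius `ρ`, then
the linear interpolation error is at most `2 L ρ` on `S`. -/
theorem interpolation_error_le_two_lipschitz_radius
    (d : ℕ) (v : Fin (d + 1) → EuclideanSpace ℝ (Fin d))
    (hv : AffineIndependent ℝ v)
    (f : EuclideanSpace ℝ (Fin d) → ℝ)
    (L : ℝ) (hL : 0 ≤ L)
    (hlip : ∀ x ∈ convexHull ℝ (Set.range v), ∀ y ∈ convexHull ℝ (Set.range v),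
      |f x - f y| ≤ L * ‖x - y‖)
    (fl : EuclideanSpace ℝ (Fin d) →ᵃ[ℝ] ℝ)
    (hfl : ∀ i, fl (v i) = f (v i))
    (c : EuclideanSpace ℝ (Fin d)) (ρ : ℝ)
    (hball : convexHull ℝ (Set.range v) ⊆ Metric.closedBall c ρ) :
    ∀ s ∈ convexHull ℝ (Set.range v), |f s - fl s| ≤ 2 * L * ρ := by
  intro s hs
  have hmem := hs
  rw [convexHull_range_eq_exists_affineCombination] at hmem
  obtain ⟨t, w, hw₀, hw₁, rfl⟩ := hmem
  have hvi : ∀ i, v i ∈ convexHull ℝ (Set.range v) := fun i =>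
    subset_convexHull ℝ _ (Set.mem_range_self i)
  -- fl of the affine combination
  have hfl' : fl (t.affineCombination ℝ v w) = ∑ i ∈ t, w i * f (v i) := by
    rw [Finset.map_affineCombination t v w hw₁ fl,
      Finset.affineCombination_eq_linear_combination t _ w hw₁]
    simp [hfl, mul_comm]
  set x := t.affineCombination ℝ v w with hx
  have hfx : f x = ∑ i ∈ t, w i * f x := by
    rw [← Finset.sum_mul, hw₁, one_mul]
  have hdist : ∀ i ∈ t, ‖x - v i‖ ≤ 2 * ρ := by
    intro i hi
    have h1 : dist x c ≤ ρ := hball hs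
    have h2 : dist (v i) c ≤ ρ := hball (hvi i)
    have := dist_triangle x c (v i)
    rw [← dist_eq_norm]
    rw [dist_comm (v i) c] at h2
    linarith
  calc |f x - fl x| = |∑ i ∈ t, w i * (f x - f (v i))| := by
        rw [hfl']
        congr 1
        simp only [mul_sub, Finset.sum_sub_distrib, ← Finset.sum_mul, hw₁, one_mul]
    _ ≤ ∑ i ∈ t, |w i * (f x - f (v i))| := Finset.abs_sum_le_sum_abs _ _
    _ ≤ ∑ i ∈ t, w i * (2 * L * ρ) := by
        refine Finset.sum_le_sum fun i hi => ?_
        rw [abs_mul, abs_of_nonneg (hw₀ i hi)]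
        refine mul_le_mul_of_nonneg_left ?_ (hw₀ i hi)
        calc |f x - f (v i)| ≤ L * ‖x - v i‖ := hlip x hs (v i) (hvi i)
          _ ≤ L * (2 * ρ) := mul_le_mul_of_nonneg_left (hdist i hi) hL
          _ = 2 * L * ρ := by ring
    _ = 2 * L * ρ := by rw [← Finset.sum_mul, hw₁, one_mul]
end

section
/- Let v₀, …, v_d be affinely independent points of ℝ^d with convex hull S, let f : ℝ^d → ℝ, and let f_l be the linear interpolant of f on S. Suppose f is Lipschitz with constant λ ≥ 0 on S, and suppose S is contained in a closed ball of radius ρ (centered at some point c ∈ ℝ^d). Then |f(s) − f_l(s)| ≤ λρ for all s ∈ S. -/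
/-!
Write `s = ∑ wᵢ vᵢ` as a convex combination of the vertices. Since `f_l` is affine,
`f s - f_l s = ∑ wᵢ (f s - f vᵢ)`, so the error is at most `L ∑ wᵢ ‖s - vᵢ‖`. By Jensen,
`(∑ wᵢ ‖s - vᵢ‖)² ≤ ∑ wᵢ ‖s - vᵢ‖²`, and by the parallel-axis identity the latter equals
`∑ wᵢ ‖vᵢ - c‖² - ‖s - c‖² ≤ ρ²`.
-/

open Finset

section Barycentric

variable {ι E : Type*} [NormedAddCommGroup E] [InnerProductSpace ℝ E]
  {t : Finset ι} {w : ι → ℝ} {p : ι → E}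

theorem sum_mul_norm_sum_smul_sub_sq (hw₁ : ∑ i ∈ t, w i = 1) (c : E) :
    ∑ i ∈ t, w i * ‖∑ j ∈ t, w j • p j - p i‖ ^ 2
      = ∑ i ∈ t, w i * ‖p i - c‖ ^ 2 - ‖∑ j ∈ t, w j • p j - c‖ ^ 2 := by
  set x := ∑ j ∈ t, w j • p j
  have hmean : ∑ i ∈ t, w i • (p i - c) = x - c := by
    simp only [smul_sub, sum_sub_distrib, ← sum_smul, hw₁, one_smul, x]
  have hexpand : ∀ i,
      ‖x - p i‖ ^ 2 = ‖x - c‖ ^ 2 - 2 * inner ℝ (p i - c) (x - c) + ‖p i - c‖ ^ 2 := by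
    intro i
    rw [← sub_sub_sub_cancel_right x (p i) c, norm_sub_sq_real, real_inner_comm]
  calc ∑ i ∈ t, w i * ‖x - p i‖ ^ 2
      = (∑ i ∈ t, w i) * ‖x - c‖ ^ 2 - 2 * inner ℝ (∑ i ∈ t, w i • (p i - c)) (x - c)
          + ∑ i ∈ t, w i * ‖p i - c‖ ^ 2 := by
        simp only [hexpand, sum_inner, real_inner_smul_left, sum_mul, mul_sum, ← sum_sub_distrib,
          ← sum_add_distrib]
        exact sum_congr rfl fun i _ => by ring
    _ = ∑ i ∈ t, w i * ‖p i - c‖ ^ 2 - ‖x - c‖ ^ 2 := by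
        rw [hmean, hw₁, real_inner_self_eq_norm_sq]; ring

theorem sum_mul_norm_sum_smul_sub_le_of_mem_closedBall (hw₀ : ∀ i ∈ t, 0 ≤ w i)
    (hw₁ : ∑ i ∈ t, w i = 1) {c : E} {ρ : ℝ} (hp : ∀ i ∈ t, p i ∈ Metric.closedBall c ρ) :
    ∑ i ∈ t, w i * ‖∑ j ∈ t, w j • p j - p i‖ ≤ ρ := by
  obtain ⟨i₀, hi₀⟩ := t.nonempty_of_sum_ne_zero (hw₁ ▸ one_ne_zero)
  have hρ : 0 ≤ ρ := Metric.nonempty_closedBall.mp ⟨_, hp i₀ hi₀⟩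
  have hjensen := (even_two.convexOn_pow (𝕜 := ℝ)).map_sum_le hw₀ hw₁
    (p := fun i => ‖∑ j ∈ t, w j • p j - p i‖) fun _ _ => Set.mem_univ _
  have hvar : ∑ i ∈ t, w i * ‖∑ j ∈ t, w j • p j - p i‖ ^ 2 ≤ ρ ^ 2 := by
    rw [sum_mul_norm_sum_smul_sub_sq hw₁ c]
    have hball : ∑ i ∈ t, w i * ‖p i - c‖ ^ 2 ≤ ρ ^ 2 := by
      calc ∑ i ∈ t, w i * ‖p i - c‖ ^ 2 ≤ ∑ i ∈ t, w i * ρ ^ 2 := by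
            refine sum_le_sum fun i hi => mul_le_mul_of_nonneg_left ?_ (hw₀ i hi)
            have := mem_closedBall_iff_norm.mp (hp i hi)
            gcongr
        _ = ρ ^ 2 := by rw [← sum_mul, hw₁, one_mul]
    linarith [sq_nonneg ‖∑ j ∈ t, w j • p j - c‖]
  refine (pow_le_pow_iff_left₀ (sum_nonneg fun i hi => mul_nonneg (hw₀ i hi) (norm_nonneg _))
    hρ two_ne_zero).mp ?_
  simpa only [smul_eq_mul] using hjensen.trans hvar

end Barycentric

theorem abs_sub_affineMap_affineCombination_le {ι E : Type*} [NormedAddCommGroup E]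
    [NormedSpace ℝ E] {t : Finset ι} {w : ι → ℝ} {p : ι → E} (hw₀ : ∀ i ∈ t, 0 ≤ w i)
    (hw₁ : ∑ i ∈ t, w i = 1) {f : E → ℝ} {g : E →ᵃ[ℝ] ℝ} (hg : ∀ i ∈ t, g (p i) = f (p i))
    {L : ℝ} (hf : ∀ i ∈ t, |f (t.affineCombination ℝ p w) - f (p i)|
      ≤ L * ‖t.affineCombination ℝ p w - p i‖) :
    |f (t.affineCombination ℝ p w) - g (t.affineCombination ℝ p w)|
      ≤ L * ∑ i ∈ t, w i * ‖t.affineCombination ℝ p w - p i‖ := by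
  set x := t.affineCombination ℝ p w
  have hgx : g x = ∑ i ∈ t, w i * f (p i) := by
    rw [map_affineCombination t p w hw₁, affineCombination_eq_linear_combination _ _ _ hw₁]
    exact sum_congr rfl fun i hi => by simp [hg i hi]
  have herr : f x - g x = ∑ i ∈ t, w i * (f x - f (p i)) := by
    simp only [hgx, mul_sub, sum_sub_distrib, ← sum_mul, hw₁, one_mul]
  calc |f x - g x| ≤ ∑ i ∈ t, w i * |f x - f (p i)| := by
        rw [herr]
        refine (abs_sum_le_sum_abs _ _).trans_eq (sum_congr rfl fun i hi => ?_)
        rw [abs_mul, abs_of_nonneg (hw₀ i hi)]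
    _ ≤ ∑ i ∈ t, w i * (L * ‖x - p i‖) :=
        sum_le_sum fun i hi => mul_le_mul_of_nonneg_left (hf i hi) (hw₀ i hi)
    _ = L * ∑ i ∈ t, w i * ‖x - p i‖ := by
        rw [mul_sum]; exact sum_congr rfl fun i _ => mul_left_comm _ _ _

theorem interpolation_error_le_lipschitz_radius_general
    (d : ℕ) (v : Fin (d + 1) → EuclideanSpace ℝ (Fin d))
    (f : EuclideanSpace ℝ (Fin d) → ℝ)
    (L : ℝ) (hL : 0 ≤ L)
    (hlip : ∀ x ∈ convexHull ℝ (Set.range v), ∀ y ∈ convexHull ℝ (Set.range v),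
      |f x - f y| ≤ L * ‖x - y‖)
    (fl : EuclideanSpace ℝ (Fin d) →ᵃ[ℝ] ℝ)
    (hfl : ∀ i, fl (v i) = f (v i))
    (c : EuclideanSpace ℝ (Fin d)) (ρ : ℝ)
    (hball : convexHull ℝ (Set.range v) ⊆ Metric.closedBall c ρ) :
    ∀ s ∈ convexHull ℝ (Set.range v), |f s - fl s| ≤ L * ρ := by
  intro s hs
  have hvS : ∀ i, v i ∈ convexHull ℝ (Set.range v) :=
    fun i => subset_convexHull ℝ _ (Set.mem_range_self i)
  obtain ⟨t, w, hw₀, hw₁, rfl⟩ : ∃ (t : Finset (Fin (d + 1))) (w : Fin (d + 1) → ℝ),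
      (∀ i ∈ t, 0 ≤ w i) ∧ ∑ i ∈ t, w i = 1 ∧ t.affineCombination ℝ v w = s := by
    rwa [convexHull_range_eq_exists_affineCombination] at hs
  calc |f _ - fl _| ≤ L * ∑ i ∈ t, w i * ‖t.affineCombination ℝ v w - v i‖ :=
        abs_sub_affineMap_affineCombination_le hw₀ hw₁ (fun i _ => hfl i)
          fun i _ => hlip _ hs _ (hvS i)
    _ ≤ L * ρ := by
        rw [affineCombination_eq_linear_combination _ _ _ hw₁]
        exact mul_le_mul_of_nonneg_left (sum_mul_norm_sum_smul_sub_le_of_mem_closedBall hw₀ hw₁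
          fun i _ => hball (hvS i)) hL

/-- Case (ii) of the paper's Proposition 1: if `f` is Lipschitz with constant `L` on the
simplex `S = conv{v₀, …, v_d}` and `S` is contained in a closed ball of radius `ρ`, then
the linear interpolation error is at most `L ρ` on `S`. -/
theorem interpolation_error_le_lipschitz_radius
    (d : ℕ) (v : Fin (d + 1) → EuclideanSpace ℝ (Fin d))
    (hv : AffineIndependent ℝ v)
    (f : EuclideanSpace ℝ (Fin d) → ℝ)
    (L : ℝ) (hL : 0 ≤ L)
    (hlip : ∀ x ∈ convexHull ℝ (Set.range v), ∀ y ∈ convexHull ℝ (Set.range v),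
      |f x - f y| ≤ L * ‖x - y‖)
    (fl : EuclideanSpace ℝ (Fin d) →ᵃ[ℝ] ℝ)
    (hfl : ∀ i, fl (v i) = f (v i))
    (c : EuclideanSpace ℝ (Fin d)) (ρ : ℝ)
    (hball : convexHull ℝ (Set.range v) ⊆ Metric.closedBall c ρ) :
    ∀ s ∈ convexHull ℝ (Set.range v), |f s - fl s| ≤ L * ρ :=
  interpolation_error_le_lipschitz_radius_general d v f L hL hlip fl hfl c ρ hball
end

section
/- Let v₀, …, v_d be affinely independent points of ℝ^d with convex hull S, and let f : ℝ^d → ℝ be continuously differentiable on an open set containing S with ‖Df(x)‖ ≤ M for all x ∈ S (operator norm of the derivative, equivalently the Euclidean norm of the gradient). Let f_l be the linear interpolant of f on S, and suppose S is contained in a closed ball of radius ρ. Then |f(s) − f_l(s)| ≤ Mρ for all s ∈ S. -/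
/-!
Write `s ∈ S` as a convex combination `s = ∑ wᵢ vᵢ`. Since the interpolant is affine and
agrees with `f` at the vertices, `f s - f_l s = ∑ wᵢ (f s - f vᵢ)`, and the mean value
inequality bounds this by `M ∑ wᵢ ‖vᵢ - s‖`. By Jensen, `(∑ wᵢ ‖vᵢ - s‖)² ≤ ∑ wᵢ ‖vᵢ - s‖²`,
and the weighted mean `s` minimises `∑ wᵢ ‖vᵢ - c‖²` over `c`, so the latter is at most
`∑ wᵢ ‖vᵢ - c‖² ≤ ρ²` for the centre `c` of the enclosing ball.
-/

open Finset

section WeightedMean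

variable {ι E : Type*} [NormedAddCommGroup E] [InnerProductSpace ℝ E]
  {t : Finset ι} {w : ι → ℝ} {p : ι → E}

/-- Huygens–Steiner (parallel axis) identity. -/
theorem sum_mul_norm_sub_sq_eq_sum_mul_norm_sub_mean_sq_add (hw : ∑ i ∈ t, w i = 1) (c : E) :
    ∑ i ∈ t, w i * ‖p i - c‖ ^ 2 =
      ∑ i ∈ t, w i * ‖p i - ∑ j ∈ t, w j • p j‖ ^ 2 + ‖∑ j ∈ t, w j • p j - c‖ ^ 2 := by
  set s := ∑ j ∈ t, w j • p j
  have hcentered : ∑ i ∈ t, w i • (p i - s) = 0 := by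
    simp only [smul_sub, sum_sub_distrib, ← sum_smul, hw, one_smul, sub_self, s]
  have hcross : ∑ i ∈ t, w i * inner ℝ (p i - s) (s - c) = 0 := by
    simp only [← real_inner_smul_left, ← sum_inner, hcentered, inner_zero_left]
  calc ∑ i ∈ t, w i * ‖p i - c‖ ^ 2
      = ∑ i ∈ t, (w i * ‖p i - s‖ ^ 2 + 2 * (w i * inner ℝ (p i - s) (s - c))
          + w i * ‖s - c‖ ^ 2) := by
        refine sum_congr rfl fun i _ => ?_
        rw [← sub_add_sub_cancel (p i) s c, norm_add_sq_real]
        ring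
    _ = ∑ i ∈ t, w i * ‖p i - s‖ ^ 2 + ‖s - c‖ ^ 2 := by
        rw [sum_add_distrib, sum_add_distrib, ← mul_sum, hcross, ← sum_mul, hw]
        ring

theorem sum_mul_norm_sub_mean_le (hw₀ : ∀ i ∈ t, 0 ≤ w i) (hw : ∑ i ∈ t, w i = 1) {c : E}
    {ρ : ℝ} (hp : ∀ i ∈ t, ‖p i - c‖ ≤ ρ) :
    ∑ i ∈ t, w i * ‖p i - ∑ j ∈ t, w j • p j‖ ≤ ρ := by
  set s := ∑ j ∈ t, w j • p j
  obtain ⟨i₀, hi₀⟩ := nonempty_of_sum_ne_zero (hw.trans_ne one_ne_zero)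
  have hρ : 0 ≤ ρ := (norm_nonneg _).trans (hp i₀ hi₀)
  have hjensen := (convexOn_pow 2).map_sum_le hw₀ hw
    (fun i _ => Set.mem_Ici.2 (norm_nonneg (p i - s)))
  simp only [smul_eq_mul] at hjensen
  refine (pow_le_pow_iff_left₀ (sum_nonneg fun i hi => ?_) hρ two_ne_zero).1 ?_
  · exact mul_nonneg (hw₀ i hi) (norm_nonneg _)
  calc (∑ i ∈ t, w i * ‖p i - s‖) ^ 2
      ≤ ∑ i ∈ t, w i * ‖p i - s‖ ^ 2 := hjensen
    _ ≤ ∑ i ∈ t, w i * ‖p i - c‖ ^ 2 := by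
        rw [sum_mul_norm_sub_sq_eq_sum_mul_norm_sub_mean_sq_add hw c]
        exact le_add_of_nonneg_right (sq_nonneg _)
    _ ≤ ∑ i ∈ t, w i * ρ ^ 2 := by
        gcongr with i hi
        · exact hw₀ i hi
        · exact hp i hi
    _ = ρ ^ 2 := by rw [← sum_mul, hw, one_mul]

end WeightedMean

section AffineInterpolation

variable {ι E : Type*} [AddCommGroup E] [Module ℝ E] {t : Finset ι} {w : ι → ℝ}

theorem AffineMap.map_sum_smul {F : Type*} [AddCommGroup F] [Module ℝ F] (g : E →ᵃ[ℝ] F)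
    (hw : ∑ i ∈ t, w i = 1) (p : ι → E) :
    g (∑ i ∈ t, w i • p i) = ∑ i ∈ t, w i • g (p i) := by
  rw [← affineCombination_eq_linear_combination t p w hw, map_affineCombination t p w hw,
    affineCombination_eq_linear_combination t _ w hw]
  rfl

theorem abs_sub_interpolant_le {f : E → ℝ} {g : E →ᵃ[ℝ] ℝ} {p : ι → E}
    (hw₀ : ∀ i ∈ t, 0 ≤ w i) (hw : ∑ i ∈ t, w i = 1) (hg : ∀ i ∈ t, g (p i) = f (p i)) :
    |f (∑ i ∈ t, w i • p i) - g (∑ i ∈ t, w i • p i)| ≤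
      ∑ i ∈ t, w i * |f (∑ j ∈ t, w j • p j) - f (p i)| := by
  set s := ∑ j ∈ t, w j • p j
  have herror : f s - g s = ∑ i ∈ t, w i * (f s - f (p i)) := by
    rw [g.map_sum_smul hw, sum_congr rfl fun i hi => by rw [hg i hi]]
    simp only [mul_sub, sum_sub_distrib, ← sum_mul, hw, one_mul, smul_eq_mul]
  rw [herror]
  refine (abs_sum_le_sum_abs _ _).trans_eq (sum_congr rfl fun i hi => ?_)
  rw [abs_mul, abs_of_nonneg (hw₀ i hi)]

end AffineInterpolation

theorem interpolation_error_le_deriv_bound_mul_radius_general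
    (d : ℕ) (v : Fin (d + 1) → EuclideanSpace ℝ (Fin d))
    (f : EuclideanSpace ℝ (Fin d) → ℝ)
    (U : Set (EuclideanSpace ℝ (Fin d))) (hU : IsOpen U)
    (hSU : convexHull ℝ (Set.range v) ⊆ U)
    (hf : ContDiffOn ℝ 1 f U)
    (M : ℝ)
    (hM : ∀ x ∈ convexHull ℝ (Set.range v), ‖fderiv ℝ f x‖ ≤ M)
    (fl : EuclideanSpace ℝ (Fin d) →ᵃ[ℝ] ℝ)
    (hfl : ∀ i, fl (v i) = f (v i))
    (c : EuclideanSpace ℝ (Fin d)) (ρ : ℝ)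
    (hball : convexHull ℝ (Set.range v) ⊆ Metric.closedBall c ρ) :
    ∀ s ∈ convexHull ℝ (Set.range v), |f s - fl s| ≤ M * ρ := by
  intro s hs
  have hvS : ∀ i, v i ∈ convexHull ℝ (Set.range v) :=
    fun i => subset_convexHull ℝ _ (Set.mem_range_self i)
  have hmvt : ∀ i, |f s - f (v i)| ≤ M * ‖v i - s‖ := by
    have hdiff : ∀ x ∈ convexHull ℝ (Set.range v), DifferentiableAt ℝ f x := fun x hx =>
      (hf.differentiableOn one_ne_zero x (hSU hx)).differentiableAt (hU.mem_nhds (hSU hx))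
    intro i
    simpa [norm_sub_rev s] using
      (convex_convexHull ℝ _).norm_image_sub_le_of_norm_fderiv_le hdiff hM (hvS i) hs
  obtain ⟨t, w, hw₀, hw, rfl⟩ := (convexHull_range_eq_exists_affineCombination v).subset hs
  rw [affineCombination_eq_linear_combination t v w hw] at hs hmvt ⊢
  calc |f (∑ i ∈ t, w i • v i) - fl (∑ i ∈ t, w i • v i)|
      ≤ ∑ i ∈ t, w i * |f (∑ j ∈ t, w j • v j) - f (v i)| :=
        abs_sub_interpolant_le hw₀ hw fun i _ => hfl i
    _ ≤ ∑ i ∈ t, w i * (M * ‖v i - ∑ j ∈ t, w j • v j‖) := by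
        gcongr with i hi
        exacts [hw₀ i hi, hmvt i]
    _ = M * ∑ i ∈ t, w i * ‖v i - ∑ j ∈ t, w j • v j‖ := by
        rw [mul_sum]
        exact sum_congr rfl fun i _ => mul_left_comm _ _ _
    _ ≤ M * ρ := by
        gcongr
        · exact (norm_nonneg _).trans (hM _ hs)
        · exact sum_mul_norm_sub_mean_le hw₀ hw fun i _ =>
            mem_closedBall_iff_norm.1 (hball (hvS i))

/-- Case (iii) of the paper's Proposition 1: if `f` is `C¹` on an open set containing the
simplex `S = conv{v₀, …, v_d}` with `‖Df(x)‖ ≤ M` on `S`, and `S` is contained in a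
closed ball of radius `ρ`, then the linear interpolation error is at most `M ρ` on `S`. -/
theorem interpolation_error_le_deriv_bound_mul_radius
    (d : ℕ) (v : Fin (d + 1) → EuclideanSpace ℝ (Fin d))
    (hv : AffineIndependent ℝ v)
    (f : EuclideanSpace ℝ (Fin d) → ℝ)
    (U : Set (EuclideanSpace ℝ (Fin d))) (hU : IsOpen U)
    (hSU : convexHull ℝ (Set.range v) ⊆ U)
    (hf : ContDiffOn ℝ 1 f U)
    (M : ℝ)
    (hM : ∀ x ∈ convexHull ℝ (Set.range v), ‖fderiv ℝ f x‖ ≤ M)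
    (fl : EuclideanSpace ℝ (Fin d) →ᵃ[ℝ] ℝ)
    (hfl : ∀ i, fl (v i) = f (v i))
    (c : EuclideanSpace ℝ (Fin d)) (ρ : ℝ)
    (hball : convexHull ℝ (Set.range v) ⊆ Metric.closedBall c ρ) :
    ∀ s ∈ convexHull ℝ (Set.range v), |f s - fl s| ≤ M * ρ :=
  interpolation_error_le_deriv_bound_mul_radius_general d v f U hU hSU hf M hM fl hfl c ρ hball
end

section
/- Let v₀, …, v_d be affinely independent points of ℝ^d with convex hull S, and let f : ℝ^d → ℝ be twice continuously differentiable on an open set containing S with ‖D²f(x)‖ ≤ M for all x ∈ S (operator norm of the second derivative, i.e., the spectral norm of the Hessian). Let f_l be the linear interpolant of f on S, and suppose S is contained in a closed ball of radius ρ. Then |f(s) − f_l(s)| ≤ (1/2) ρ² M for all s ∈ S. -/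
/-!
Write `s ∈ S` as a convex combination `s = ∑ wᵢ vᵢ`. Since `fl` is affine and agrees with `f` at
the vertices, and `∑ wᵢ (vᵢ - s) = 0` kills the first-order term,
`fl s - f s = ∑ wᵢ (f vᵢ - f s - Df(s)(vᵢ - s))`. Each Taylor remainder is at most
`M/2 ‖vᵢ - s‖²`, and by the parallel axis theorem
`∑ wᵢ ‖vᵢ - s‖² = ∑ wᵢ ‖vᵢ - c‖² - ‖s - c‖² ≤ ρ²`.
-/
open Set Finset

section Taylor

variable {E F : Type*} [NormedAddCommGroup E] [NormedSpace ℝ E]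
  [NormedAddCommGroup F] [NormedSpace ℝ F]

theorem norm_image_one_le_half_of_norm_deriv_le_mul {g g' : ℝ → F} {K : ℝ} (hg0 : g 0 = 0)
    (hg : ∀ t ∈ Icc (0 : ℝ) 1, HasDerivAt g (g' t) t)
    (hg' : ∀ t ∈ Ico (0 : ℝ) 1, ‖g' t‖ ≤ K * t) :
    ‖g 1‖ ≤ K / 2 := by
  have hB : ∀ t : ℝ, HasDerivAt (fun t : ℝ => K / 2 * t ^ 2) (K * t) t := fun t =>
    ((hasDerivAt_pow 2 t).const_mul (K / 2)).congr_deriv (by norm_num; ring)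
  have := image_norm_le_of_norm_deriv_right_le_deriv_boundary'
    (fun t ht => (hg t ht).continuousAt.continuousWithinAt)
    (fun t ht => (hg t (Ico_subset_Icc_self ht)).hasDerivWithinAt)
    (by simp [hg0]) (by fun_prop) (fun t _ => (hB t).hasDerivWithinAt) hg'
    (right_mem_Icc.2 zero_le_one)
  simpa using this

theorem Convex.norm_image_sub_sub_fderiv_le {f : E → F} {S : Set E} {M : ℝ} (hS : Convex ℝ S)
    (hf : ∀ x ∈ S, DifferentiableAt ℝ f x) (hf' : ∀ x ∈ S, DifferentiableAt ℝ (fderiv ℝ f) x)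
    (hM : ∀ x ∈ S, ‖fderiv ℝ (fderiv ℝ f) x‖ ≤ M) {x y : E} (hx : x ∈ S) (hy : y ∈ S) :
    ‖f y - f x - fderiv ℝ f x (y - x)‖ ≤ M / 2 * ‖y - x‖ ^ 2 := by
  set u := y - x
  have hseg : ∀ t ∈ Icc (0 : ℝ) 1, x + t • u ∈ S := fun t ht => hS.add_smul_sub_mem hx hy ht
  have hderiv : ∀ t ∈ Icc (0 : ℝ) 1,
      HasDerivAt (fun t : ℝ => f (x + t • u) - f x - t • fderiv ℝ f x u)
        (fderiv ℝ f (x + t • u) u - fderiv ℝ f x u) t := by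
    intro t ht
    have hline : HasDerivAt (fun t : ℝ => x + t • u) u t := by
      simpa using ((hasDerivAt_id t).smul_const u).const_add x
    have := (((hf _ (hseg t ht)).hasFDerivAt.comp_hasDerivAt t hline).sub_const (f x)).sub
      ((hasDerivAt_id t).smul_const (fderiv ℝ f x u))
    rwa [one_smul] at this
  have hbound : ∀ t ∈ Ico (0 : ℝ) 1,
      ‖fderiv ℝ f (x + t • u) u - fderiv ℝ f x u‖ ≤ M * ‖u‖ ^ 2 * t := by
    intro t ht
    have hLip := hS.norm_image_sub_le_of_norm_fderiv_le hf' hM hx (hseg t (Ico_subset_Icc_self ht))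
    calc ‖fderiv ℝ f (x + t • u) u - fderiv ℝ f x u‖
        = ‖(fderiv ℝ f (x + t • u) - fderiv ℝ f x) u‖ := rfl
      _ ≤ ‖fderiv ℝ f (x + t • u) - fderiv ℝ f x‖ * ‖u‖ := ContinuousLinearMap.le_opNorm _ _
      _ ≤ M * ‖x + t • u - x‖ * ‖u‖ := mul_le_mul_of_nonneg_right hLip (norm_nonneg u)
      _ = M * ‖u‖ ^ 2 * t := by
        rw [add_sub_cancel_left, norm_smul, Real.norm_of_nonneg ht.1]; ring
  have := norm_image_one_le_half_of_norm_deriv_le_mul (by simp) hderiv hbound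
  simpa [u, mul_div_right_comm] using this

end Taylor

section Barycentric

variable {ι E : Type*} {t : Finset ι} {w : ι → ℝ} {v : ι → E} {s : E}

theorem Finset.sum_smul_sub_eq_zero [AddCommGroup E] [Module ℝ E]
    (hw1 : ∑ i ∈ t, w i = 1) (hs : ∑ i ∈ t, w i • v i = s) :
    ∑ i ∈ t, w i • (v i - s) = 0 := by
  simp only [smul_sub, sum_sub_distrib, ← sum_smul, hw1, hs, one_smul, sub_self]

theorem AffineMap.apply_sub_eq_sum_smul_sub_sub [AddCommGroup E] [Module ℝ E]
    {F : Type*} [AddCommGroup F] [Module ℝ F] (fl : E →ᵃ[ℝ] F) (f : E → F) (L : E →ₗ[ℝ] F)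
    (hw1 : ∑ i ∈ t, w i = 1) (hs : ∑ i ∈ t, w i • v i = s) (hfl : ∀ i ∈ t, fl (v i) = f (v i)) :
    fl s - f s = ∑ i ∈ t, w i • (f (v i) - f s - L (v i - s)) := by
  have hfls : fl s = ∑ i ∈ t, w i • f (v i) := by
    rw [← hs, ← affineCombination_eq_linear_combination t v w hw1, map_affineCombination t v w hw1,
      affineCombination_eq_linear_combination t _ w hw1]
    exact sum_congr rfl fun i hi => by simp [hfl i hi]
  have hL : ∑ i ∈ t, w i • L (v i - s) = 0 := by
    simp only [← map_smul, ← map_sum, sum_smul_sub_eq_zero hw1 hs, map_zero]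
  simp only [smul_sub, sum_sub_distrib, hL, ← sum_smul, hw1, one_smul, hfls, sub_zero]

theorem Finset.sum_mul_norm_sub_sq_add_norm_sub_sq [NormedAddCommGroup E] [InnerProductSpace ℝ E]
    (c : E) (hw1 : ∑ i ∈ t, w i = 1) (hs : ∑ i ∈ t, w i • v i = s) :
    ∑ i ∈ t, w i * ‖v i - s‖ ^ 2 + ‖s - c‖ ^ 2 = ∑ i ∈ t, w i * ‖v i - c‖ ^ 2 := by
  have hcross : ∑ i ∈ t, w i * inner ℝ (v i - s) (s - c) = 0 := by
    simp only [← real_inner_smul_left, ← sum_inner, sum_smul_sub_eq_zero hw1 hs, inner_zero_left]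
  have hexpand : ∀ i, ‖v i - c‖ ^ 2 = ‖v i - s‖ ^ 2 + 2 * inner ℝ (v i - s) (s - c) + ‖s - c‖ ^ 2 :=
    fun i => by rw [← norm_add_sq_real, sub_add_sub_cancel]
  simp only [hexpand, mul_add, sum_add_distrib, ← sum_mul, hw1, one_mul, mul_left_comm _ (2 : ℝ),
    ← mul_sum, hcross, mul_zero, add_zero]

theorem Finset.sum_mul_norm_sub_sq_le_sq [NormedAddCommGroup E] [InnerProductSpace ℝ E]
    {c : E} {ρ : ℝ} (hw0 : ∀ i ∈ t, 0 ≤ w i) (hw1 : ∑ i ∈ t, w i = 1)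
    (hs : ∑ i ∈ t, w i • v i = s) (hρ : ∀ i ∈ t, ‖v i - c‖ ≤ ρ) :
    ∑ i ∈ t, w i * ‖v i - s‖ ^ 2 ≤ ρ ^ 2 := by
  have hvc : ∑ i ∈ t, w i * ‖v i - c‖ ^ 2 ≤ ∑ i ∈ t, w i * ρ ^ 2 :=
    sum_le_sum fun i hi => mul_le_mul_of_nonneg_left
      (pow_le_pow_left₀ (norm_nonneg _) (hρ i hi) 2) (hw0 i hi)
  rw [← sum_mul, hw1, one_mul, ← sum_mul_norm_sub_sq_add_norm_sub_sq c hw1 hs] at hvc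
  nlinarith [sq_nonneg ‖s - c‖]

end Barycentric

theorem interpolation_error_le_half_radius_sq_mul_hessian_bound_general
    (d : ℕ) (v : Fin (d + 1) → EuclideanSpace ℝ (Fin d))
    (f : EuclideanSpace ℝ (Fin d) → ℝ)
    (U : Set (EuclideanSpace ℝ (Fin d))) (hU : IsOpen U)
    (hSU : convexHull ℝ (Set.range v) ⊆ U)
    (hf : ContDiffOn ℝ 2 f U)
    (M : ℝ)
    (hM : ∀ x ∈ convexHull ℝ (Set.range v), ‖fderiv ℝ (fderiv ℝ f) x‖ ≤ M)
    (fl : EuclideanSpace ℝ (Fin d) →ᵃ[ℝ] ℝ)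
    (hfl : ∀ i, fl (v i) = f (v i))
    (c : EuclideanSpace ℝ (Fin d)) (ρ : ℝ)
    (hball : convexHull ℝ (Set.range v) ⊆ Metric.closedBall c ρ) :
    ∀ s ∈ convexHull ℝ (Set.range v), |f s - fl s| ≤ (1 / 2) * ρ ^ 2 * M := by
  intro s hs
  have hvS : ∀ i, v i ∈ convexHull ℝ (range v) := fun i => subset_convexHull ℝ _ (mem_range_self i)
  have hC2 : ∀ x ∈ convexHull ℝ (range v), ContDiffAt ℝ 2 f x :=
    fun x hx => hf.contDiffAt (hU.mem_nhds (hSU hx))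
  have hTaylor : ∀ i, ‖f (v i) - f s - fderiv ℝ f s (v i - s)‖ ≤ M / 2 * ‖v i - s‖ ^ 2 :=
    fun i => (convex_convexHull ℝ _).norm_image_sub_sub_fderiv_le
      (fun x hx => (hC2 x hx).differentiableAt two_ne_zero)
      (fun x hx => ((hC2 x hx).fderiv_right le_rfl).differentiableAt one_ne_zero) hM hs (hvS i)
  have hM0 : 0 ≤ M := (norm_nonneg (fderiv ℝ (fderiv ℝ f) s)).trans (hM s hs)
  rw [convexHull_range_eq_exists_affineCombination] at hs
  obtain ⟨t, w, hw0, hw1, hsw⟩ := hs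
  rw [affineCombination_eq_linear_combination t v w hw1] at hsw
  rw [← abs_neg, neg_sub, ← Real.norm_eq_abs,
    fl.apply_sub_eq_sum_smul_sub_sub f (fderiv ℝ f s).toLinearMap hw1 hsw fun i _ => hfl i]
  calc ‖∑ i ∈ t, w i • (f (v i) - f s - fderiv ℝ f s (v i - s))‖
      ≤ ∑ i ∈ t, w i * (M / 2 * ‖v i - s‖ ^ 2) := norm_sum_le_of_le t fun i hi => by
        rw [norm_smul, Real.norm_of_nonneg (hw0 i hi)]
        exact mul_le_mul_of_nonneg_left (hTaylor i) (hw0 i hi)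
    _ = M / 2 * ∑ i ∈ t, w i * ‖v i - s‖ ^ 2 := by
        rw [mul_sum]; exact sum_congr rfl fun i _ => mul_left_comm _ _ _
    _ ≤ M / 2 * ρ ^ 2 := by
        gcongr
        exact sum_mul_norm_sub_sq_le_sq hw0 hw1 hsw fun i _ =>
          mem_closedBall_iff_norm.1 (hball (hvS i))
    _ = 1 / 2 * ρ ^ 2 * M := by ring

/-- Case (iv) of the paper's Proposition 1: if `f` is `C²` on an open set containing the
simplex `S = conv{v₀, …, v_d}` with `‖D²f(x)‖ ≤ M` on `S` (operator norm of the second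
derivative), and `S` is contained in a closed ball of radius `ρ`, then the linear
interpolation error is at most `(1/2) ρ² M` on `S`. -/
theorem interpolation_error_le_half_radius_sq_mul_hessian_bound
    (d : ℕ) (v : Fin (d + 1) → EuclideanSpace ℝ (Fin d))
    (hv : AffineIndependent ℝ v)
    (f : EuclideanSpace ℝ (Fin d) → ℝ)
    (U : Set (EuclideanSpace ℝ (Fin d))) (hU : IsOpen U)
    (hSU : convexHull ℝ (Set.range v) ⊆ U)
    (hf : ContDiffOn ℝ 2 f U)
    (M : ℝ)
    (hM : ∀ x ∈ convexHull ℝ (Set.range v), ‖fderiv ℝ (fderiv ℝ f) x‖ ≤ M)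
    (fl : EuclideanSpace ℝ (Fin d) →ᵃ[ℝ] ℝ)
    (hfl : ∀ i, fl (v i) = f (v i))
    (c : EuclideanSpace ℝ (Fin d)) (ρ : ℝ)
    (hball : convexHull ℝ (Set.range v) ⊆ Metric.closedBall c ρ) :
    ∀ s ∈ convexHull ℝ (Set.range v), |f s - fl s| ≤ (1 / 2) * ρ ^ 2 * M :=
  interpolation_error_le_half_radius_sq_mul_hessian_bound_general d v f U hU hSU hf M hM fl hfl c ρ
    hball
end

section
/- Let v₀, …, v_d be points of ℝ^d and let δ = max_{i,j} ‖vᵢ − vⱼ‖ be the diameter of this point set. Then there exists a point c ∈ ℝ^d such that the convex hull S of v₀, …, v_d is contained in the closed ball of radius √(d / (2(d+1))) · δ centered at c. -/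
/-!
For weights `w` in the standard simplex put `c_w = ∑ wᵢ vᵢ` and
`G(w) = ∑ wᵢ ‖vᵢ‖² - ‖c_w‖² = ∑ wᵢ ‖vᵢ - c_w‖²`. Expanding around each vertex (Huygens–Steiner)
gives `2 G(w) = ∑ᵢⱼ wᵢ wⱼ ‖vᵢ - vⱼ‖² ≤ (1 - ∑ wᵢ²) δ² ≤ (1 - 1/k) δ²` for `k` points, the last
step by Cauchy–Schwarz. Along the segment from `w` to a vertex `eᵢ`, `G` is the concave parabola
`(1 - t) G(w) + t (1 - t) ‖vᵢ - c_w‖²`, so at a maximiser `w` of `G` on the simplex every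
`‖vᵢ - c_w‖²` is at most `G(w)`: the ball about `c_w` of radius `√((1 - 1/k)/2) δ` contains
every `vᵢ`.
-/

open scoped RealInnerProductSpace
open Finset Filter Topology

section WeightedVariance

variable {ι E : Type*} [Fintype ι] [NormedAddCommGroup E] [InnerProductSpace ℝ E]

noncomputable def weightedVariance (v : ι → E) (w : ι → ℝ) : ℝ :=
  ∑ i, w i * ‖v i‖ ^ 2 - ‖∑ i, w i • v i‖ ^ 2

theorem continuous_weightedVariance (v : ι → E) : Continuous (weightedVariance v) := by
  unfold weightedVariance
  fun_prop

theorem sum_mul_norm_sub_sq_eq {w : ι → ℝ} (hw : ∑ i, w i = 1) (v : ι → E) (x : E) :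
    ∑ i, w i * ‖v i - x‖ ^ 2 = weightedVariance v w + ‖x - ∑ i, w i • v i‖ ^ 2 := by
  have hinner : ∑ i, w i * (2 * ⟪v i, x⟫) = 2 * ⟪x, ∑ i, w i • v i⟫ := by
    simp only [inner_sum, real_inner_smul_right, mul_sum, real_inner_comm x]
    exact sum_congr rfl fun i _ => by ring
  simp only [weightedVariance, norm_sub_sq_real, mul_add, mul_sub, sum_add_distrib,
    sum_sub_distrib, ← sum_mul, hw, one_mul]
  linear_combination -hinner

theorem sum_mul_norm_sub_sq_eq_weightedVariance {w : ι → ℝ} (hw : ∑ i, w i = 1) (v : ι → E) :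
    ∑ i, w i * ‖v i - ∑ j, w j • v j‖ ^ 2 = weightedVariance v w := by
  simp [sum_mul_norm_sub_sq_eq hw]

theorem two_mul_weightedVariance_eq {w : ι → ℝ} (hw : ∑ i, w i = 1) (v : ι → E) :
    2 * weightedVariance v w = ∑ i, ∑ j, w i * w j * ‖v i - v j‖ ^ 2 := by
  calc 2 * weightedVariance v w
      = ∑ j, w j * (weightedVariance v w + ‖v j - ∑ i, w i • v i‖ ^ 2) := by
        rw [← sum_mul_norm_sub_sq_eq_weightedVariance hw v]
        simp only [mul_add, sum_add_distrib, ← sum_mul, hw, one_mul,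
          sum_mul_norm_sub_sq_eq_weightedVariance hw v]
        ring
    _ = ∑ j, ∑ i, w i * w j * ‖v i - v j‖ ^ 2 := by
        simp only [← sum_mul_norm_sub_sq_eq hw, mul_sum]
        exact sum_congr rfl fun j _ => sum_congr rfl fun i _ => by ring
    _ = ∑ i, ∑ j, w i * w j * ‖v i - v j‖ ^ 2 := sum_comm

theorem two_mul_weightedVariance_le {v : ι → E} {w : ι → ℝ} {δ : ℝ} (hw₀ : ∀ i, 0 ≤ w i)
    (hw : ∑ i, w i = 1) (hv : ∀ i j, ‖v i - v j‖ ≤ δ) :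
    2 * weightedVariance v w ≤ (1 - ∑ i, w i ^ 2) * δ ^ 2 := by
  have hgap : ∀ i j, 0 ≤ w i * w j * (δ ^ 2 - ‖v i - v j‖ ^ 2) := fun i j =>
    mul_nonneg (mul_nonneg (hw₀ i) (hw₀ j))
      (sub_nonneg.2 (pow_le_pow_left₀ (norm_nonneg _) (hv i j) 2))
  have hdiag : ∑ i, w i ^ 2 * δ ^ 2 ≤ ∑ i, ∑ j, w i * w j * (δ ^ 2 - ‖v i - v j‖ ^ 2) :=
    sum_le_sum fun i _ => by
      simpa [sq] using single_le_sum (fun j _ => hgap i j) (mem_univ i)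
  have htotal : ∑ i, ∑ j, w i * w j * δ ^ 2 = δ ^ 2 := by
    simp only [mul_assoc, ← mul_sum, ← sum_mul, hw, one_mul]
  simp only [mul_sub, sum_sub_distrib, htotal, ← two_mul_weightedVariance_eq hw] at hdiag
  rw [sub_mul, one_mul, sum_mul]
  linarith

theorem weightedVariance_one_sub_smul_add_smul_single [DecidableEq ι] {w : ι → ℝ}
    (hw : ∑ i, w i = 1) (v : ι → E) (i : ι) (t : ℝ) :
    weightedVariance v ((1 - t) • w + t • Pi.single i 1) =
      (1 - t) * weightedVariance v w + t * (1 - t) * ‖v i - ∑ j, w j • v j‖ ^ 2 := by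
  set c := ∑ j, w j • v j
  set m := (1 - t) • w + t • Pi.single i (1 : ℝ)
  have hm : ∑ j, m j = 1 := by simp [m, sum_add_distrib, ← mul_sum, hw]
  have hcm : ∑ j, m j • v j = (1 - t) • c + t • v i := by
    simp only [m, Pi.add_apply, Pi.smul_apply, smul_eq_mul, add_smul, mul_smul, sum_add_distrib,
      ← smul_sum, Pi.single_apply, ite_smul, one_smul, zero_smul, sum_ite_eq', mem_univ, if_true, c]
  have hshift : c - ∑ j, m j • v j = -(t • (v i - c)) := by rw [hcm]; module
  have hsum : ∑ j, m j * ‖v j - c‖ ^ 2 = (1 - t) * weightedVariance v w + t * ‖v i - c‖ ^ 2 := by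
    simp [m, add_mul, mul_assoc, sum_add_distrib, ← mul_sum, Pi.single_apply,
      sum_mul_norm_sub_sq_eq_weightedVariance hw v, c]
  have hsteiner := sum_mul_norm_sub_sq_eq hm v c
  rw [hshift, norm_neg, norm_smul, mul_pow, Real.norm_eq_abs, sq_abs, hsum] at hsteiner
  linear_combination -hsteiner

theorem IsMaxOn.norm_sub_sq_le_weightedVariance {v : ι → E} {w : ι → ℝ}
    (hw : w ∈ stdSimplex ℝ ι) (hmax : IsMaxOn (weightedVariance v) (stdSimplex ℝ ι) w) (i : ι) :
    ‖v i - ∑ j, w j • v j‖ ^ 2 ≤ weightedVariance v w := by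
  classical
  set B := ‖v i - ∑ j, w j • v j‖ ^ 2
  have hle : ∀ t ∈ Set.Ioo (0 : ℝ) 1, (1 - t) * B ≤ weightedVariance v w := by
    rintro t ⟨ht₀, ht₁⟩
    have hmem : (1 - t) • w + t • Pi.single i 1 ∈ stdSimplex ℝ ι :=
      convex_stdSimplex ℝ ι hw (single_mem_stdSimplex ℝ i) (by linarith) ht₀.le (by ring)
    have hG := isMaxOn_iff.1 hmax _ hmem
    rw [weightedVariance_one_sub_smul_add_smul_single hw.2 v i t] at hG
    exact le_of_mul_le_mul_left (by linarith) ht₀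
  have hlim : Tendsto (fun t : ℝ => (1 - t) * B) (𝓝[>] 0) (𝓝 B) := by
    have hcont : Continuous fun t : ℝ => (1 - t) * B := by fun_prop
    exact tendsto_nhdsWithin_of_tendsto_nhds (hcont.tendsto' 0 B (by simp))
  exact le_of_tendsto hlim (eventually_of_mem (Ioo_mem_nhdsGT one_pos) hle)

theorem exists_forall_two_mul_norm_sub_sq_le [Nonempty ι] {v : ι → E} {δ : ℝ}
    (hv : ∀ i j, ‖v i - v j‖ ≤ δ) :
    ∃ c : E, ∀ i, 2 * ‖v i - c‖ ^ 2 ≤ (1 - (Fintype.card ι : ℝ)⁻¹) * δ ^ 2 := by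
  classical
  obtain ⟨w, hw, hmax⟩ := (isCompact_stdSimplex ℝ ι).exists_isMaxOn
    ⟨_, single_mem_stdSimplex ℝ (Classical.arbitrary ι)⟩
    (continuous_weightedVariance v).continuousOn
  have hcard : (Fintype.card ι : ℝ)⁻¹ ≤ ∑ i, w i ^ 2 := by
    have hcs := sq_sum_le_card_mul_sum_sq (s := univ) (f := w)
    rw [hw.2, one_pow, card_univ] at hcs
    exact (inv_le_iff_one_le_mul₀' (by positivity)).2 hcs
  refine ⟨∑ j, w j • v j, fun i => ?_⟩
  calc 2 * ‖v i - ∑ j, w j • v j‖ ^ 2 ≤ 2 * weightedVariance v w := by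
        gcongr
        exact hmax.norm_sub_sq_le_weightedVariance hw i
    _ ≤ (1 - ∑ i, w i ^ 2) * δ ^ 2 := two_mul_weightedVariance_le hw.1 hw.2 hv
    _ ≤ (1 - (Fintype.card ι : ℝ)⁻¹) * δ ^ 2 := by gcongr

end WeightedVariance

/-- Jung-type enclosing-ball bound (Stämpfle, Lemma 4.3): if `δ` is the diameter of the
point set `{v₀, …, v_d} ⊆ ℝ^d` (the maximum pairwise distance), then the convex hull of
the points is contained in a closed ball of radius `√(d / (2(d+1))) · δ`. -/
theorem convexHull_subset_closedBall_jung
    (d : ℕ) (v : Fin (d + 1) → EuclideanSpace ℝ (Fin d)) (δ : ℝ)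
    (hδ : IsGreatest {r : ℝ | ∃ i j, r = ‖v i - v j‖} δ) :
    ∃ c : EuclideanSpace ℝ (Fin d),
      convexHull ℝ (Set.range v) ⊆
        Metric.closedBall c (Real.sqrt ((d : ℝ) / (2 * ((d : ℝ) + 1))) * δ) := by
  have hv : ∀ i j, ‖v i - v j‖ ≤ δ := fun i j => hδ.2 ⟨i, j, rfl⟩
  have hδ₀ : 0 ≤ δ := (norm_nonneg _).trans (hv 0 0)
  obtain ⟨c, hc⟩ := exists_forall_two_mul_norm_sub_sq_le hv
  refine ⟨c, convexHull_min ?_ (convex_closedBall c _)⟩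
  rintro _ ⟨i, rfl⟩
  have hradius :
      1 - (Fintype.card (Fin (d + 1)) : ℝ)⁻¹ = 2 * ((d : ℝ) / (2 * ((d : ℝ) + 1))) := by
    rw [Fintype.card_fin]
    field_simp
    push_cast
    ring
  have hi := hc i
  rw [hradius] at hi
  rw [Metric.mem_closedBall, dist_eq_norm, ← Real.sqrt_sq hδ₀, ← Real.sqrt_mul (by positivity),
    Real.le_sqrt (norm_nonneg _) (by positivity)]
  linarith
end
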